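/- arXiv:2307.11071 — 4 statements merged into one kernel-verified Lean document; each statement's English description precedes it below -/
import Mathlib

section
/- Let B = [[a,b],[c,d]] ∈ SL(2,ℂ) have columns aligned with two distinct directions μ, ν ∈ ℙ¹(ℂ), and set Q₂ = -ab, Q₃ = cd, η = max{1, |Q₂|, |Q₃|}. Then η ≤ d(μ,ν)⁻¹ ≤ √5 · η, where d(μ,ν) denotes the absolute value of the sine of the angle between the directions μ and ν in ℂ². -/
open Matrix Complex Filter

noncomputable section

/-- Operator norm of a 2×2 complex matrix acting on ℂ². -/
def opN (A : Matrix (Fin 2) (Fin 2) ℂ) : ℝ :=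
  ‖Matrix.toEuclideanCLM (𝕜 := ℂ) (n := Fin 2) A‖

/-- Determinant of the 2×2 matrix with columns u, v. -/
def crossDet (u v : Fin 2 → ℂ) : ℂ := u 0 * v 1 - u 1 * v 0

/-- Euclidean norm of a vector in ℂ². -/
def vnorm (u : Fin 2 → ℂ) : ℝ := Real.sqrt (‖u 0‖ ^ 2 + ‖u 1‖ ^ 2)

/-- Sine-of-angle distance between the directions of two nonzero vectors. -/
def dSin (u v : Fin 2 → ℂ) : ℝ := ‖crossDet u v‖ / (vnorm u * vnorm v)

/-- Two vectors span the same direction (are parallel). -/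
def SameDir (u v : Fin 2 → ℂ) : Prop := crossDet u v = 0

def vI : Fin 2 → ℂ := ![Complex.I, 1]
def vmI : Fin 2 → ℂ := ![-Complex.I, 1]

abbrev SL2C := Matrix.SpecialLinearGroup (Fin 2) ℂ

/-- The set K_{x,y} of B ∈ SL(2,ℂ) sending direction x to i and y to -i. -/
def Kset (x y : Fin 2 → ℂ) : Set SL2C :=
  {B | SameDir ((B : Matrix (Fin 2) (Fin 2) ℂ).mulVec x) vI ∧
       SameDir ((B : Matrix (Fin 2) (Fin 2) ℂ).mulVec y) vmI}

/-- k(x,y) = inf over K_{x,y} of ‖B‖². -/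
def kfun (x y : Fin 2 → ℂ) : ℝ :=
  sInf ((fun B : SL2C => opN (B : Matrix (Fin 2) (Fin 2) ℂ) ^ 2) '' Kset x y)

/-- B is minimizing: ‖B⁻¹·(i,1)‖ = ‖B⁻¹·(-i,1)‖. -/
def Minimizing (B : SL2C) : Prop :=
  vnorm ((((B⁻¹ : SL2C) : Matrix (Fin 2) (Fin 2) ℂ)).mulVec vI) =
  vnorm (((B⁻¹ : SL2C) : Matrix (Fin 2) (Fin 2) ℂ).mulVec vmI)

/-- Rotation matrix R_λ, for complex λ. -/
def Rmat (l : ℂ) : Matrix (Fin 2) (Fin 2) ℂ :=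
  !![Complex.cos (2 * Real.pi * l), -Complex.sin (2 * Real.pi * l);
     Complex.sin (2 * Real.pi * l), Complex.cos (2 * Real.pi * l)]

/-- Diagonal matrix D_μ = diag(μ, μ⁻¹). -/
def Dmat (m : ℂ) : Matrix (Fin 2) (Fin 2) ℂ := !![m, 0; 0, m⁻¹]

/-- Möbius action of a 2×2 complex matrix on ℂ. -/
def moebius (A : Matrix (Fin 2) (Fin 2) ℂ) (z : ℂ) : ℂ :=
  (A 0 0 * z + A 0 1) / (A 1 0 * z + A 1 1)

/-- Cocycle product B_n(x) = B(x+(n-1)α) ⋯ B(x). -/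
def coc (α : ℝ) (B : ℝ → Matrix (Fin 2) (Fin 2) ℂ) : ℕ → ℝ → Matrix (Fin 2) (Fin 2) ℂ
  | 0, _ => 1
  | n + 1, x => B (x + n * α) * coc α B n x

/-- Uniform hyperbolicity of the cocycle (α, B), witnessed by continuous
invariant unstable/stable direction fields U, S with exponential expansion/contraction. -/
def UnifHyp (α : ℝ) (B : ℝ → Matrix (Fin 2) (Fin 2) ℂ) (U S : ℝ → Fin 2 → ℂ) : Prop :=
  Continuous U ∧ Continuous S ∧ (∀ x, U x ≠ 0) ∧ (∀ x, S x ≠ 0) ∧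
  (∀ x, SameDir (U (x + 1)) (U x)) ∧ (∀ x, SameDir (S (x + 1)) (S x)) ∧
  (∀ x, SameDir ((B x).mulVec (U x)) (U (x + α))) ∧
  (∀ x, SameDir ((B x).mulVec (S x)) (S (x + α))) ∧
  ∃ C > 0, ∃ lam > 1, ∀ n : ℕ, ∀ x : ℝ,
    vnorm ((coc α B n x).mulVec (U x)) ≥ C⁻¹ * lam ^ n * vnorm (U x) ∧
    vnorm ((coc α B n x).mulVec (S x)) ≤ C * lam⁻¹ ^ n * vnorm (S x)

/-- The Lyapunov exponent of the cocycle (α, B) is L. -/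
def IsLE (α : ℝ) (B : ℝ → Matrix (Fin 2) (Fin 2) ℂ) (L : ℝ) : Prop :=
  Tendsto (fun n : ℕ => (n : ℝ)⁻¹ * ∫ x in (0:ℝ)..1, Real.log (opN (coc α B n x)))
    atTop (nhds L)

/-- Complexification of a real matrix. -/
def cplx (A : Matrix (Fin 2) (Fin 2) ℝ) : Matrix (Fin 2) (Fin 2) ℂ :=
  A.map (Complex.ofReal)

/-- The denominators q_n of the continued fraction approximants. -/
def qden (α : ℝ) (n : ℕ) : ℝ := (GenContFract.of α).dens n

/-- β(α) = limsup (ln q_{n+1})/q_n. -/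
def betaCF (α : ℝ) : ℝ :=
  Filter.limsup (fun n : ℕ => Real.log (qden α (n + 1)) / qden α n) atTop

end

private lemma vnorm_smul' (t : ℂ) (u : Fin 2 → ℂ) : vnorm (t • u) = ‖t‖ * vnorm u := by
  unfold vnorm
  simp only [Pi.smul_apply, smul_eq_mul, norm_mul]
  rw [mul_pow, mul_pow, ← mul_add, Real.sqrt_mul (by positivity), Real.sqrt_sq (norm_nonneg t)]

private lemma crossDet_smul' (t s : ℂ) (u v : Fin 2 → ℂ) :
    crossDet (t • u) (s • v) = t * s * crossDet u v := by
  unfold crossDet; simp only [Pi.smul_apply, smul_eq_mul]; ring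

private lemma exists_scalar {u μ : Fin 2 → ℂ} (hu : u ≠ 0) (hμ : μ ≠ 0)
    (h : crossDet u μ = 0) : ∃ t : ℂ, t ≠ 0 ∧ μ = t • u := by
  unfold crossDet at h
  have hu' : u 0 ≠ 0 ∨ u 1 ≠ 0 := by
    by_contra hc
    push_neg at hc
    exact hu (funext fun i => by fin_cases i <;> simp [hc.1, hc.2])
  have key : ∃ t : ℂ, μ = t • u := by
    rcases hu' with h0 | h1
    · refine ⟨μ 0 / u 0, funext fun i => ?_⟩
      fin_cases i
      · simp only [Pi.smul_apply, smul_eq_mul, Fin.zero_eta, Fin.mk_one]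
        field_simp
      · simp only [Pi.smul_apply, smul_eq_mul, Fin.zero_eta, Fin.mk_one]
        field_simp
        linear_combination h
    · refine ⟨μ 1 / u 1, funext fun i => ?_⟩
      fin_cases i
      · simp only [Pi.smul_apply, smul_eq_mul, Fin.zero_eta, Fin.mk_one]
        field_simp
        linear_combination -h
      · simp only [Pi.smul_apply, smul_eq_mul, Fin.zero_eta, Fin.mk_one]
        field_simp
  obtain ⟨t, ht⟩ := key
  refine ⟨t, ?_, ht⟩
  rintro rfl
  exact hμ (by simpa using ht)

private lemma sqrt_bounds (A B C D : ℝ) (hA : 0 ≤ A) (hB : 0 ≤ B) (hC : 0 ≤ C) (hD : 0 ≤ D)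
    (h1 : 1 ≤ A * D + B * C) (h2 : A * D - B * C ≤ 1) (h3 : B * C - A * D ≤ 1) :
    max 1 (max (A * B) (C * D)) ≤ Real.sqrt ((A ^ 2 + C ^ 2) * (B ^ 2 + D ^ 2)) ∧
    Real.sqrt ((A ^ 2 + C ^ 2) * (B ^ 2 + D ^ 2)) ≤ Real.sqrt 5 * max 1 (max (A * B) (C * D)) := by
  set η := max 1 (max (A * B) (C * D)) with hη
  have hη1 : (1 : ℝ) ≤ η := le_max_left _ _
  have hAB : A * B ≤ η := le_trans (le_max_left _ _) (le_max_right _ _)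
  have hCD : C * D ≤ η := le_trans (le_max_right _ _) (le_max_right _ _)
  have hABn : 0 ≤ A * B := mul_nonneg hA hB
  have hCDn : 0 ≤ C * D := mul_nonneg hC hD
  constructor
  · apply max_le
    · rw [show (1 : ℝ) = Real.sqrt 1 by simp]
      apply Real.sqrt_le_sqrt
      nlinarith [sq_nonneg (A * B - C * D), mul_nonneg (mul_nonneg hA hD) (mul_nonneg hB hC)]
    · apply max_le
      · rw [show A * B = Real.sqrt ((A * B) ^ 2) from (Real.sqrt_sq hABn).symm]
        apply Real.sqrt_le_sqrt
        nlinarith [sq_nonneg (A * D), sq_nonneg (C * B), sq_nonneg (C * D)]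
      · rw [show C * D = Real.sqrt ((C * D) ^ 2) from (Real.sqrt_sq hCDn).symm]
        apply Real.sqrt_le_sqrt
        nlinarith [sq_nonneg (A * D), sq_nonneg (C * B), sq_nonneg (A * B)]
  · have hP : (A ^ 2 + C ^ 2) * (B ^ 2 + D ^ 2) ≤ 5 * η ^ 2 := by
      nlinarith [mul_le_mul hAB hCD hCDn (le_trans zero_le_one hη1), hη1, hAB, hCD]
    calc Real.sqrt ((A ^ 2 + C ^ 2) * (B ^ 2 + D ^ 2)) ≤ Real.sqrt (5 * η ^ 2) :=
          Real.sqrt_le_sqrt hP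
      _ = Real.sqrt 5 * η := by
          rw [Real.sqrt_mul (by norm_num), Real.sqrt_sq (le_trans zero_le_one hη1)]

/-- Q₂-Q₃ estimate for the inverse angle. -/
theorem stmt0 (μ ν : Fin 2 → ℂ) (hμ : μ ≠ 0) (hν : ν ≠ 0) (hdist : ¬ SameDir μ ν)
    (B : SL2C)
    (hcol1 : SameDir (fun i => (B : Matrix (Fin 2) (Fin 2) ℂ) i 0) μ)
    (hcol2 : SameDir (fun i => (B : Matrix (Fin 2) (Fin 2) ℂ) i 1) ν) :
    max 1 (max ‖-((B : Matrix (Fin 2) (Fin 2) ℂ) 0 0 * (B : Matrix (Fin 2) (Fin 2) ℂ) 0 1)‖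
               ‖(B : Matrix (Fin 2) (Fin 2) ℂ) 1 0 * (B : Matrix (Fin 2) (Fin 2) ℂ) 1 1‖)
      ≤ (dSin μ ν)⁻¹ ∧
    (dSin μ ν)⁻¹ ≤ Real.sqrt 5 *
      max 1 (max ‖-((B : Matrix (Fin 2) (Fin 2) ℂ) 0 0 * (B : Matrix (Fin 2) (Fin 2) ℂ) 0 1)‖
                 ‖(B : Matrix (Fin 2) (Fin 2) ℂ) 1 0 * (B : Matrix (Fin 2) (Fin 2) ℂ) 1 1‖) := by
  set M := (B : Matrix (Fin 2) (Fin 2) ℂ) with hM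
  have hdet : M 0 0 * M 1 1 - M 0 1 * M 1 0 = 1 := by
    have := B.property
    rwa [Matrix.det_fin_two] at this
  set u : Fin 2 → ℂ := fun i => M i 0 with hu
  set v : Fin 2 → ℂ := fun i => M i 1 with hv
  have hu0 : u ≠ 0 := by
    intro h
    have h0 : M 0 0 = 0 := congrFun h 0
    have h1 : M 1 0 = 0 := congrFun h 1
    rw [h0, h1] at hdet
    simp at hdet
  have hv0 : v ≠ 0 := by
    intro h
    have h0 : M 0 1 = 0 := congrFun h 0
    have h1 : M 1 1 = 0 := congrFun h 1
    rw [h0, h1] at hdet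
    simp at hdet
  obtain ⟨t, ht0, htμ⟩ := exists_scalar hu0 hμ hcol1
  obtain ⟨s, hs0, hsν⟩ := exists_scalar hv0 hν hcol2
  have hcduv : crossDet u v = 1 := by
    unfold crossDet
    simp only [hu, hv]
    linear_combination hdet
  have hdSin : dSin μ ν = dSin u v := by
    rw [htμ, hsν]
    unfold dSin
    rw [crossDet_smul', vnorm_smul', vnorm_smul', norm_mul, norm_mul]
    have hts : ‖t‖ * ‖s‖ ≠ 0 := by
      simp [norm_eq_zero, ht0, hs0]
    rw [show ‖t‖ * vnorm u * (‖s‖ * vnorm v) = ‖t‖ * ‖s‖ * (vnorm u * vnorm v) by ring]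
    exact mul_div_mul_left _ _ hts
  have hvn : (dSin μ ν)⁻¹ = vnorm u * vnorm v := by
    rw [hdSin]
    unfold dSin
    rw [hcduv]
    simp
  have hprod : vnorm u * vnorm v =
      Real.sqrt ((‖M 0 0‖ ^ 2 + ‖M 1 0‖ ^ 2) * (‖M 0 1‖ ^ 2 + ‖M 1 1‖ ^ 2)) := by
    unfold vnorm
    rw [← Real.sqrt_mul (by positivity)]
  have h1 : 1 ≤ ‖M 0 0‖ * ‖M 1 1‖ + ‖M 0 1‖ * ‖M 1 0‖ := by
    have := norm_sub_le (M 0 0 * M 1 1) (M 0 1 * M 1 0)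
    rw [hdet] at this
    simpa [norm_mul] using this
  have h2 : ‖M 0 0‖ * ‖M 1 1‖ - ‖M 0 1‖ * ‖M 1 0‖ ≤ 1 := by
    have := norm_sub_norm_le (M 0 0 * M 1 1) (M 0 1 * M 1 0)
    rw [hdet] at this
    simpa [norm_mul] using this
  have h3 : ‖M 0 1‖ * ‖M 1 0‖ - ‖M 0 0‖ * ‖M 1 1‖ ≤ 1 := by
    have := norm_sub_norm_le (M 0 1 * M 1 0) (M 0 0 * M 1 1)
    have heq : ‖M 0 1 * M 1 0 - M 0 0 * M 1 1‖ = 1 := by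
      rw [show M 0 1 * M 1 0 - M 0 0 * M 1 1 = -(M 0 0 * M 1 1 - M 0 1 * M 1 0) by ring,
        norm_neg, hdet, norm_one]
    rw [heq] at this
    simpa [norm_mul] using this
  obtain ⟨hlow, hhigh⟩ := sqrt_bounds (‖M 0 0‖) (‖M 0 1‖) (‖M 1 0‖) (‖M 1 1‖)
    (norm_nonneg _) (norm_nonneg _) (norm_nonneg _) (norm_nonneg _) h1 h2 h3
  have hmax : max 1 (max ‖-(M 0 0 * M 0 1)‖ ‖M 1 0 * M 1 1‖) =
      max 1 (max (‖M 0 0‖ * ‖M 0 1‖) (‖M 1 0‖ * ‖M 1 1‖)) := by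
    rw [norm_neg, norm_mul, norm_mul]
  rw [hvn, hprod, hmax]
  exact ⟨hlow, hhigh⟩
end

section
/- For distinct x, y ∈ ℙ¹(ℂ), the infimum k(x,y) = inf{‖B‖² : B ∈ SL(2,ℂ), B·x = i, B·y = -i} is attained, and it is attained exactly at those B ∈ K_{x,y} for which ‖B⁻¹·(i,1)ᵀ‖ = ‖B⁻¹·(-i,1)ᵀ‖ (the minimizing matrices). -/
open Matrix Complex Filter

noncomputable section

lemma vnorm_nonneg (u : Fin 2 → ℂ) : 0 ≤ vnorm u := Real.sqrt_nonneg _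

lemma vnorm_sq (u : Fin 2 → ℂ) :
    vnorm u ^ 2 = Complex.normSq (u 0) + Complex.normSq (u 1) := by
  rw [vnorm, Real.sq_sqrt (by positivity)]
  simp [Complex.sq_norm]

lemma vnorm_pos (v : Fin 2 → ℂ) (hv : v ≠ 0) : 0 < vnorm v := by
  have h01 : v 0 ≠ 0 ∨ v 1 ≠ 0 := by
    by_contra h
    push_neg at h
    exact hv (funext fun i => by fin_cases i <;> simp [h.1, h.2])
  apply Real.sqrt_pos.mpr
  rcases h01 with h | h
  · have : 0 < ‖v 0‖ ^ 2 := pow_pos (norm_pos_iff.mpr h) 2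
    nlinarith [sq_nonneg ‖v 1‖]
  · have : 0 < ‖v 1‖ ^ 2 := pow_pos (norm_pos_iff.mpr h) 2
    nlinarith [sq_nonneg ‖v 0‖]

lemma norm_withLp (u : Fin 2 → ℂ) :
    ‖(WithLp.equiv 2 (Fin 2 → ℂ)).symm u‖ = vnorm u := by
  rw [EuclideanSpace.norm_eq]
  simp [vnorm, Fin.sum_univ_two]

lemma opN_mulVec_le (A : Matrix (Fin 2) (Fin 2) ℂ) (v : Fin 2 → ℂ) :
    vnorm (A.mulVec v) ≤ opN A * vnorm v := by
  have := (Matrix.toEuclideanCLM (𝕜 := ℂ) (n := Fin 2) A).le_opNorm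
    ((WithLp.equiv 2 (Fin 2 → ℂ)).symm v)
  rwa [show ∀ w, Matrix.toEuclideanCLM (𝕜 := ℂ) (n := Fin 2) A ((WithLp.equiv 2 (Fin 2 → ℂ)).symm w) = (WithLp.equiv 2 (Fin 2 → ℂ)).symm (Matrix.toLin' A w) from fun w => rfl, Matrix.toLin'_apply, norm_withLp, norm_withLp] at this

lemma opN_le_bound (A : Matrix (Fin 2) (Fin 2) ℂ) (c : ℝ) (hc : 0 ≤ c)
    (h : ∀ v, vnorm (A.mulVec v) ≤ c * vnorm v) : opN A ≤ c := by
  apply ContinuousLinearMap.opNorm_le_bound _ hc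
  intro x
  have hx : (WithLp.equiv 2 (Fin 2 → ℂ)).symm ((WithLp.equiv 2 (Fin 2 → ℂ)) x) = x :=
    (WithLp.equiv 2 (Fin 2 → ℂ)).symm_apply_apply x
  rw [← hx, show ∀ w, Matrix.toEuclideanCLM (𝕜 := ℂ) (n := Fin 2) A ((WithLp.equiv 2 (Fin 2 → ℂ)).symm w) = (WithLp.equiv 2 (Fin 2 → ℂ)).symm (Matrix.toLin' A w) from fun w => rfl, Matrix.toLin'_apply, norm_withLp, norm_withLp]
  exact h _

lemma opN_ge (A : Matrix (Fin 2) (Fin 2) ℂ) (v : Fin 2 → ℂ) (hv : v ≠ 0) (c : ℝ)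
    (h : c * vnorm v ≤ vnorm (A.mulVec v)) : c ≤ opN A := by
  have h1 := opN_mulVec_le A v
  have hvn : 0 < vnorm v := vnorm_pos v hv
  nlinarith [h.trans h1]

/-- Frobenius norm squared. -/
def frobSq (M : Matrix (Fin 2) (Fin 2) ℂ) : ℝ :=
  Complex.normSq (M 0 0) + Complex.normSq (M 0 1) + Complex.normSq (M 1 0) + Complex.normSq (M 1 1)


lemma quad_bound (al be n0 n1 w nz : ℝ) (hal0 : 0 ≤ al) (hbe0 : 0 ≤ be)
    (hn0 : 0 ≤ n0) (hn1 : 0 ≤ n1) (hab : al * be = nz) (hw2 : w^2 ≤ nz * n0 * n1) :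
    2 * w ≤ al * n0 + be * n1 := by
  have h4 : 4*(al*n0)*(be*n1) = 4*nz*n0*n1 := by rw [← hab]; ring
  have hS : 0 ≤ al * n0 + be * n1 := add_nonneg (mul_nonneg hal0 hn0) (mul_nonneg hbe0 hn1)
  nlinarith [sq_nonneg (al * n0 - be * n1), hw2, h4, hS]

lemma opN_sq_helper (M : Matrix (Fin 2) (Fin 2) ℂ) (P Q nz lam : ℝ) (z : ℂ)
    (hP : P = Complex.normSq (M 0 0) + Complex.normSq (M 1 0))
    (hQ : Q = Complex.normSq (M 0 1) + Complex.normSq (M 1 1))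
    (hz : z = (starRingEnd ℂ) (M 0 0) * M 0 1 + (starRingEnd ℂ) (M 1 0) * M 1 1)
    (hnz : nz = Complex.normSq z)
    (hlam : lam = (P + Q + Real.sqrt ((P - Q)^2 + 4*nz))/2) :
    opN M ^ 2 = lam := by
  have hP0 : 0 ≤ P := hP ▸ add_nonneg (Complex.normSq_nonneg _) (Complex.normSq_nonneg _)
  have hQ0 : 0 ≤ Q := hQ ▸ add_nonneg (Complex.normSq_nonneg _) (Complex.normSq_nonneg _)
  have hnz0 : 0 ≤ nz := hnz ▸ Complex.normSq_nonneg _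
  have hs0 : 0 ≤ Real.sqrt ((P - Q)^2 + 4*nz) := Real.sqrt_nonneg _
  have hs2 : Real.sqrt ((P - Q)^2 + 4*nz)^2 = (P - Q)^2 + 4*nz :=
    Real.sq_sqrt (by nlinarith [sq_nonneg (P-Q)])
  have hsabs : |P - Q| ≤ Real.sqrt ((P - Q)^2 + 4*nz) := by
    rw [← Real.sqrt_sq_eq_abs]
    exact Real.sqrt_le_sqrt (by nlinarith)
  have habs := abs_le.mp hsabs
  have hal0 : 0 ≤ lam - P := by rw [hlam]; linarith [habs.1]
  have hbe0 : 0 ≤ lam - Q := by rw [hlam]; linarith [habs.2]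
  have hlam0 : 0 ≤ lam := by rw [hlam]; linarith
  have hab : (lam - P) * (lam - Q) = nz := by
    rw [hlam]
    nlinarith [hs2]
  have key : ∀ v : Fin 2 → ℂ,
      vnorm (M.mulVec v) ^ 2 =
        P * Complex.normSq (v 0) + Q * Complex.normSq (v 1)
          + 2 * (z * (starRingEnd ℂ) (v 0) * v 1).re := by
    intro v
    rw [vnorm_sq, hP, hQ, hz]
    simp only [Matrix.mulVec, dotProduct, Fin.sum_univ_two]
    simp only [Complex.normSq_apply, Complex.add_re, Complex.add_im, Complex.mul_re,
      Complex.mul_im, Complex.conj_re, Complex.conj_im]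
    ring
  have hub : ∀ v : Fin 2 → ℂ, vnorm (M.mulVec v) ≤ Real.sqrt lam * vnorm v := by
    intro v
    have hn0 : 0 ≤ Complex.normSq (v 0) := Complex.normSq_nonneg _
    have hn1 : 0 ≤ Complex.normSq (v 1) := Complex.normSq_nonneg _
    have hw2 : (z * (starRingEnd ℂ) (v 0) * v 1).re^2
        ≤ nz * Complex.normSq (v 0) * Complex.normSq (v 1) := by
      have h1 : (z * (starRingEnd ℂ) (v 0) * v 1).re^2
          ≤ Complex.normSq (z * (starRingEnd ℂ) (v 0) * v 1) := by
        rw [Complex.normSq_apply]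
        nlinarith [sq_nonneg (z * (starRingEnd ℂ) (v 0) * v 1).im]
      have h2 : Complex.normSq (z * (starRingEnd ℂ) (v 0) * v 1)
          = nz * Complex.normSq (v 0) * Complex.normSq (v 1) := by
        rw [hnz]; simp only [Complex.normSq_mul, Complex.normSq_conj]
      linarith [h2 ▸ h1]
    have goal2 := quad_bound (lam - P) (lam - Q) (Complex.normSq (v 0)) (Complex.normSq (v 1))
      ((z * (starRingEnd ℂ) (v 0) * v 1).re) nz hal0 hbe0 hn0 hn1 hab hw2
    have hquad : vnorm (M.mulVec v) ^ 2 ≤ lam * vnorm v ^ 2 := by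
      rw [key v, vnorm_sq]
      nlinarith [goal2]
    calc vnorm (M.mulVec v) = Real.sqrt (vnorm (M.mulVec v) ^ 2) :=
          (Real.sqrt_sq (vnorm_nonneg _)).symm
      _ ≤ Real.sqrt (lam * vnorm v ^ 2) := Real.sqrt_le_sqrt hquad
      _ = Real.sqrt lam * vnorm v := by
          rw [Real.sqrt_mul hlam0, Real.sqrt_sq (vnorm_nonneg _)]
  have hattain : ∃ v : Fin 2 → ℂ, v ≠ 0 ∧ vnorm (M.mulVec v) ^ 2 = lam * vnorm v ^ 2 := by
    by_cases hA : lam - P = 0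
    · refine ⟨![1, 0], ?_, ?_⟩
      · intro h
        have := congrFun h 0
        simp at this
      · rw [key ![1, 0], vnorm_sq]
        have hlamP : lam = P := by linarith
        simp only [Matrix.cons_val_zero, Matrix.cons_val_one, Matrix.head_cons]
        rw [hlamP]
        simp
    · refine ⟨![z, ((lam - P : ℝ) : ℂ)], ?_, ?_⟩
      · intro h
        have := congrFun h 1
        simp at this
        exact hA (by exact_mod_cast this)
      · rw [key ![z, ((lam - P : ℝ) : ℂ)], vnorm_sq]
        simp only [Matrix.cons_val_zero, Matrix.cons_val_one, Matrix.head_cons]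
        have e1 : (z * (starRingEnd ℂ) z * ((lam - P : ℝ) : ℂ)).re
            = Complex.normSq z * (lam - P) := by
          rw [Complex.mul_conj, ← Complex.ofReal_mul, Complex.ofReal_re]
        rw [e1, Complex.normSq_ofReal, ← hnz]
        nlinarith [hab]
  have hlb : Real.sqrt lam ≤ opN M := by
    obtain ⟨v, hvne, hveq⟩ := hattain
    apply opN_ge M v hvne
    have h3 : (Real.sqrt lam * vnorm v)^2 = vnorm (M.mulVec v) ^2 := by
      rw [mul_pow, Real.sq_sqrt hlam0, hveq]
    nlinarith [vnorm_nonneg (M.mulVec v), Real.sqrt_nonneg lam, vnorm_nonneg v,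
      mul_nonneg (Real.sqrt_nonneg lam) (vnorm_nonneg v)]
  have hopn : opN M = Real.sqrt lam :=
    le_antisymm (opN_le_bound M _ (Real.sqrt_nonneg _) hub) hlb
  rw [hopn, Real.sq_sqrt hlam0]

lemma opN_sq_eq (M : Matrix (Fin 2) (Fin 2) ℂ) :
    opN M ^ 2 = (frobSq M + Real.sqrt (frobSq M ^ 2 - 4 * Complex.normSq M.det)) / 2 := by
  have lagrange : (Complex.normSq (M 0 0) + Complex.normSq (M 1 0))
      * (Complex.normSq (M 0 1) + Complex.normSq (M 1 1))
      = Complex.normSq ((starRingEnd ℂ) (M 0 0) * M 0 1 + (starRingEnd ℂ) (M 1 0) * M 1 1)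
        + Complex.normSq (M.det) := by
    rw [Matrix.det_fin_two]
    simp only [Complex.normSq_apply, Complex.add_re, Complex.add_im, Complex.mul_re,
      Complex.mul_im, Complex.sub_re, Complex.sub_im, Complex.conj_re, Complex.conj_im]
    ring
  have h := opN_sq_helper M
    (Complex.normSq (M 0 0) + Complex.normSq (M 1 0))
    (Complex.normSq (M 0 1) + Complex.normSq (M 1 1))
    (Complex.normSq ((starRingEnd ℂ) (M 0 0) * M 0 1 + (starRingEnd ℂ) (M 1 0) * M 1 1))
    _ _ rfl rfl rfl rfl rfl
  rw [h]
  have harg : ((Complex.normSq (M 0 0) + Complex.normSq (M 1 0))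
      - (Complex.normSq (M 0 1) + Complex.normSq (M 1 1)))^2
      + 4 * Complex.normSq ((starRingEnd ℂ) (M 0 0) * M 0 1 + (starRingEnd ℂ) (M 1 0) * M 1 1)
      = frobSq M ^ 2 - 4 * Complex.normSq M.det := by
    rw [frobSq]
    nlinarith [lagrange]
  rw [harg, frobSq]
  ring_nf

/-! new part -/

def Pm : Matrix (Fin 2) (Fin 2) ℂ := !![Complex.I, -Complex.I; 1, 1]

def Qmat (x y : Fin 2 → ℂ) : Matrix (Fin 2) (Fin 2) ℂ := !![x 0, y 0; x 1, y 1]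

lemma two_I_ne : (2 * Complex.I : ℂ) ≠ 0 := by simp [Complex.I_ne_zero]

lemma parallelogram (z w : ℂ) :
    Complex.normSq (z - w) + Complex.normSq (z + w) = 2 * (Complex.normSq z + Complex.normSq w) := by
  simp only [Complex.normSq_apply, Complex.sub_re, Complex.sub_im, Complex.add_re, Complex.add_im]
  ring

lemma amgm (A Bv g : ℝ) (hA : 0 < A) (hg : 0 ≤ g) (hAB : A * Bv = g ^ 2) :
    2 * g ≤ A + Bv ∧ (A + Bv = 2 * g ↔ A = Bv) := by
  have hB : 0 ≤ Bv := by
    nlinarith [sq_nonneg g]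
  constructor
  · nlinarith [sq_nonneg (A - Bv)]
  · constructor
    · intro h
      nlinarith [sq_nonneg (A - Bv)]
    · intro h
      have hAg : A = g := by nlinarith
      rw [← h, hAg]
      ring

lemma hfun_mono (t1 t2 : ℝ) (h1 : 1 ≤ t1) (hle : t1 ≤ t2) :
    t1 + Real.sqrt (t1 ^ 2 - 1) ≤ t2 + Real.sqrt (t2 ^ 2 - 1) :=
  add_le_add hle (Real.sqrt_le_sqrt (by nlinarith))

lemma hfun_inj (t1 t2 : ℝ) (h1 : 1 ≤ t1) (hle : t1 ≤ t2)
    (he : t1 + Real.sqrt (t1 ^ 2 - 1) = t2 + Real.sqrt (t2 ^ 2 - 1)) : t1 = t2 := by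
  have := Real.sqrt_le_sqrt (show t1^2 - 1 ≤ t2^2 - 1 by nlinarith)
  linarith

section Main

variable (R : Matrix (Fin 2) (Fin 2) ℂ)

lemma form_entries (μ : ℂ) :
    Pm * Dmat μ * R =
      !![Complex.I * (μ * R 0 0 - μ⁻¹ * R 1 0), Complex.I * (μ * R 0 1 - μ⁻¹ * R 1 1);
         μ * R 0 0 + μ⁻¹ * R 1 0, μ * R 0 1 + μ⁻¹ * R 1 1] := by
  ext i j
  fin_cases i <;> fin_cases j <;>
    simp [Pm, Dmat, Matrix.mul_apply, Fin.sum_univ_two] <;> ring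

lemma detR_ne (hdetR : R.det = -Complex.I / 2) : R.det ≠ 0 := by rw [hdetR]; simp [Complex.I_ne_zero]

lemma p_pos (hdetR : R.det = -Complex.I / 2) : 0 < Complex.normSq (R 0 0) + Complex.normSq (R 0 1) := by
  rcases (add_nonneg (Complex.normSq_nonneg (R 0 0)) (Complex.normSq_nonneg (R 0 1))).lt_or_eq with h | h
  · exact h
  · exfalso
    have h0 : Complex.normSq (R 0 0) = 0 ∧ Complex.normSq (R 0 1) = 0 := by
      constructor <;> nlinarith [Complex.normSq_nonneg (R 0 0), Complex.normSq_nonneg (R 0 1)]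
    have ha : R 0 0 = 0 := Complex.normSq_eq_zero.mp h0.1
    have hb : R 0 1 = 0 := Complex.normSq_eq_zero.mp h0.2
    apply detR_ne R hdetR
    rw [Matrix.det_fin_two, ha, hb]
    ring

lemma q_pos (hdetR : R.det = -Complex.I / 2) : 0 < Complex.normSq (R 1 0) + Complex.normSq (R 1 1) := by
  rcases (add_nonneg (Complex.normSq_nonneg (R 1 0)) (Complex.normSq_nonneg (R 1 1))).lt_or_eq with h | h
  · exact h
  · exfalso
    have h0 : Complex.normSq (R 1 0) = 0 ∧ Complex.normSq (R 1 1) = 0 := by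
      constructor <;> nlinarith [Complex.normSq_nonneg (R 1 0), Complex.normSq_nonneg (R 1 1)]
    have ha : R 1 0 = 0 := Complex.normSq_eq_zero.mp h0.1
    have hb : R 1 1 = 0 := Complex.normSq_eq_zero.mp h0.2
    apply detR_ne R hdetR
    rw [Matrix.det_fin_two, ha, hb]
    ring

lemma pq_ge (hdetR : R.det = -Complex.I / 2) : 1/4 ≤ (Complex.normSq (R 0 0) + Complex.normSq (R 0 1))
    * (Complex.normSq (R 1 0) + Complex.normSq (R 1 1)) := by
  have lag : (Complex.normSq (R 0 0) + Complex.normSq (R 0 1))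
      * (Complex.normSq (R 1 0) + Complex.normSq (R 1 1))
      = Complex.normSq (R.det)
        + Complex.normSq (R 0 0 * (starRingEnd ℂ) (R 1 0) + R 0 1 * (starRingEnd ℂ) (R 1 1)) := by
    rw [Matrix.det_fin_two]
    simp only [Complex.normSq_apply, Complex.add_re, Complex.add_im, Complex.mul_re,
      Complex.mul_im, Complex.sub_re, Complex.sub_im, Complex.conj_re, Complex.conj_im]
    ring
  have hdn : Complex.normSq (R.det) = 1/4 := by
    rw [hdetR]
    simp [Complex.normSq_apply]
    norm_num
  rw [lag, hdn]
  linarith [Complex.normSq_nonneg (R 0 0 * (starRingEnd ℂ) (R 1 0) + R 0 1 * (starRingEnd ℂ) (R 1 1))]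

lemma form_det (hdetR : R.det = -Complex.I / 2) (μ : ℂ) (hμ : μ ≠ 0) :
    (Pm * Dmat μ * R).det = 1 := by
  rw [Matrix.det_mul, Matrix.det_mul, hdetR]
  have h1 : Pm.det = 2 * Complex.I := by
    rw [Pm, Matrix.det_fin_two_of]; ring
  have h2 : (Dmat μ).det = 1 := by
    rw [Dmat, Matrix.det_fin_two_of, mul_inv_cancel₀ hμ]; ring
  rw [h1, h2]
  have := Complex.I_sq
  field_simp
  linear_combination -Complex.I_sq

lemma form_opN (hdetR : R.det = -Complex.I / 2) (μ : ℂ) (hμ : μ ≠ 0) :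
    opN (Pm * Dmat μ * R) ^ 2 =
      (Complex.normSq μ * (Complex.normSq (R 0 0) + Complex.normSq (R 0 1))
        + (Complex.normSq (R 1 0) + Complex.normSq (R 1 1)) / Complex.normSq μ)
      + Real.sqrt ((Complex.normSq μ * (Complex.normSq (R 0 0) + Complex.normSq (R 0 1))
        + (Complex.normSq (R 1 0) + Complex.normSq (R 1 1)) / Complex.normSq μ) ^ 2 - 1) := by
  set p := Complex.normSq (R 0 0) + Complex.normSq (R 0 1) with hp
  set q := Complex.normSq (R 1 0) + Complex.normSq (R 1 1) with hq
  set u := Complex.normSq μ with hu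
  have hu0 : 0 < u := by
    rw [hu]
    exact Complex.normSq_pos.mpr hμ
  have hp0 := p_pos R hdetR
  have hq0 := q_pos R hdetR
  rw [← hp] at hp0
  rw [← hq] at hq0
  set t := u * p + q / u with ht
  have hfrob : frobSq (Pm * Dmat μ * R) = 2 * t := by
    rw [form_entries]
    rw [frobSq]
    simp only [Matrix.cons_val', Matrix.cons_val_zero, Matrix.cons_val_one, Matrix.head_cons,
      Matrix.head_fin_const, Matrix.empty_val', Matrix.cons_val_fin_one, Matrix.of_apply]
    simp only [show ∀ z : ℂ, Complex.normSq (Complex.I * z) = Complex.normSq z from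
      fun z => by rw [Complex.normSq_mul, Complex.normSq_I, one_mul]]
    have pr1 := parallelogram (μ * R 0 0) (μ⁻¹ * R 1 0)
    have pr2 := parallelogram (μ * R 0 1) (μ⁻¹ * R 1 1)
    have expand : ∀ z w : ℂ, Complex.normSq (μ * z) + Complex.normSq (μ⁻¹ * w)
        = u * Complex.normSq z + Complex.normSq w / u := by
      intro z w
      rw [Complex.normSq_mul, Complex.normSq_mul, Complex.normSq_inv, ← hu]
      rw [div_eq_mul_inv, mul_comm (Complex.normSq w) u⁻¹]
    rw [expand] at pr1 pr2
    rw [ht, hp, hq]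
    have hsplit : 2 * ((u * (Complex.normSq (R 0 0) + Complex.normSq (R 0 1)))
          + (Complex.normSq (R 1 0) + Complex.normSq (R 1 1)) / u)
        = 2 * (u * Complex.normSq (R 0 0) + Complex.normSq (R 1 0) / u)
          + 2 * (u * Complex.normSq (R 0 1) + Complex.normSq (R 1 1) / u) := by
      field_simp
      ring
    rw [hsplit]
    linarith [pr1, pr2]
  have hdet1 : Complex.normSq ((Pm * Dmat μ * R).det) = 1 := by
    rw [form_det R hdetR μ hμ]
    simp
  have ht1 : 1 ≤ t := by
    have hpq : (1:ℝ)/4 ≤ p * q := pq_ge R hdetR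
    have hg0 : 0 ≤ Real.sqrt (p * q) := Real.sqrt_nonneg _
    have hAB : (u * p) * (q / u) = Real.sqrt (p * q) ^ 2 := by
      rw [Real.sq_sqrt (by positivity)]
      field_simp
    have h2g := (amgm (u * p) (q / u) (Real.sqrt (p * q)) (by positivity) hg0 hAB).1
    have hghalf : (1:ℝ)/2 ≤ Real.sqrt (p * q) := by
      have : Real.sqrt (1/4) ≤ Real.sqrt (p * q) := Real.sqrt_le_sqrt hpq
      rwa [show (1/4:ℝ) = (1/2)^2 by norm_num, Real.sqrt_sq (by norm_num)] at this
    rw [ht]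
    linarith
  rw [opN_sq_eq, hfrob, hdet1]
  rw [show (2*t)^2 - 4*1 = 4*(t^2-1) by ring,
    Real.sqrt_mul (by norm_num : (0:ℝ) ≤ 4),
    show Real.sqrt 4 = 2 by
      rw [show (4:ℝ) = 2^2 by norm_num]; exact Real.sqrt_sq (by norm_num)]
  ring

lemma form_min (hdetR : R.det = -Complex.I / 2) (μ : ℂ) (hμ : μ ≠ 0) (B : SL2C)
    (hB : (B : Matrix (Fin 2) (Fin 2) ℂ) = Pm * Dmat μ * R) :
    Minimizing B ↔
      Complex.normSq μ * (Complex.normSq (R 0 0) + Complex.normSq (R 0 1))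
        = (Complex.normSq (R 1 0) + Complex.normSq (R 1 1)) / Complex.normSq μ := by
  set p := Complex.normSq (R 0 0) + Complex.normSq (R 0 1) with hp
  set q := Complex.normSq (R 1 0) + Complex.normSq (R 1 1) with hq
  set u := Complex.normSq μ with hu
  have hu0 : 0 < u := Complex.normSq_pos.mpr hμ
  have hinv : ((B⁻¹ : SL2C) : Matrix (Fin 2) (Fin 2) ℂ) = (Pm * Dmat μ * R).adjugate := by
    rw [Matrix.SpecialLinearGroup.coe_inv, hB]
  have hadj : (Pm * Dmat μ * R).adjugate =
      !![μ * R 0 1 + μ⁻¹ * R 1 1, -(Complex.I * (μ * R 0 1 - μ⁻¹ * R 1 1));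
         -(μ * R 0 0 + μ⁻¹ * R 1 0), Complex.I * (μ * R 0 0 - μ⁻¹ * R 1 0)] := by
    rw [form_entries, Matrix.adjugate_fin_two]
    simp
  have hv1 : ((B⁻¹ : SL2C) : Matrix (Fin 2) (Fin 2) ℂ).mulVec vI
      = ![2 * Complex.I * (μ⁻¹ * R 1 1), -(2 * Complex.I * (μ⁻¹ * R 1 0))] := by
    rw [hinv, hadj]
    funext i
    fin_cases i <;>
      simp [Matrix.mulVec, dotProduct, Fin.sum_univ_two, vI] <;> ring
  have hv2 : ((B⁻¹ : SL2C) : Matrix (Fin 2) (Fin 2) ℂ).mulVec vmI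
      = ![-(2 * Complex.I * (μ * R 0 1)), 2 * Complex.I * (μ * R 0 0)] := by
    rw [hinv, hadj]
    funext i
    fin_cases i <;>
      simp [Matrix.mulVec, dotProduct, Fin.sum_univ_two, vmI] <;> ring
  have hnsq : ∀ z : ℂ, Complex.normSq (2 * Complex.I * z) = 4 * Complex.normSq z := by
    intro z
    rw [Complex.normSq_mul, Complex.normSq_mul, Complex.normSq_I, Complex.normSq_ofNat]
    norm_num
  have hn1 : vnorm (((B⁻¹ : SL2C) : Matrix (Fin 2) (Fin 2) ℂ).mulVec vI) ^ 2 = 4 * (q / u) := by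
    rw [vnorm_sq, hv1]
    simp only [Matrix.cons_val_zero, Matrix.cons_val_one, Matrix.head_cons, Complex.normSq_neg]
    rw [hnsq, hnsq, Complex.normSq_mul, Complex.normSq_mul, Complex.normSq_inv, ← hu, hq]
    field_simp
    ring
  have hn2 : vnorm (((B⁻¹ : SL2C) : Matrix (Fin 2) (Fin 2) ℂ).mulVec vmI) ^ 2 = 4 * (u * p) := by
    rw [vnorm_sq, hv2]
    simp only [Matrix.cons_val_zero, Matrix.cons_val_one, Matrix.head_cons, Complex.normSq_neg]
    rw [hnsq, hnsq, Complex.normSq_mul, Complex.normSq_mul, ← hu, hp]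
    ring
  constructor
  · intro h
    have : vnorm (((B⁻¹ : SL2C) : Matrix (Fin 2) (Fin 2) ℂ).mulVec vI) ^ 2
        = vnorm (((B⁻¹ : SL2C) : Matrix (Fin 2) (Fin 2) ℂ).mulVec vmI) ^ 2 := by rw [h]
    rw [hn1, hn2] at this
    linarith
  · intro h
    have h2 : vnorm (((B⁻¹ : SL2C) : Matrix (Fin 2) (Fin 2) ℂ).mulVec vI) ^ 2
        = vnorm (((B⁻¹ : SL2C) : Matrix (Fin 2) (Fin 2) ℂ).mulVec vmI) ^ 2 := by
      rw [hn1, hn2, h]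
    have hnn1 : 0 ≤ vnorm (((B⁻¹ : SL2C) : Matrix (Fin 2) (Fin 2) ℂ).mulVec vI) := Real.sqrt_nonneg _
    have hnn2 : 0 ≤ vnorm (((B⁻¹ : SL2C) : Matrix (Fin 2) (Fin 2) ℂ).mulVec vmI) := Real.sqrt_nonneg _
    exact (pow_left_inj₀ hnn1 hnn2 two_ne_zero).mp h2

end Main

section KChar

variable (x y : Fin 2 → ℂ)

lemma Qdet : (Qmat x y).det = crossDet x y := by
  simp [Qmat, Matrix.det_fin_two_of, crossDet]
  ring

lemma Qcol0 : (Qmat x y).mulVec ![1, 0] = x := by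
  funext i
  fin_cases i <;> simp [Qmat, Matrix.mulVec, dotProduct, Fin.sum_univ_two]

lemma Qcol1 : (Qmat x y).mulVec ![0, 1] = y := by
  funext i
  fin_cases i <;> simp [Qmat, Matrix.mulVec, dotProduct, Fin.sum_univ_two]

lemma s_ne (hδ : crossDet x y ≠ 0) (s : ℂ)
    (hs : s ^ 2 = crossDet x y / (2 * Complex.I)) : s ≠ 0 := by
  intro h
  rw [h] at hs
  exact hδ (by
    have : crossDet x y / (2 * Complex.I) = 0 := by rw [← hs]; ring
    field_simp at this
    simpa using this)

lemma detsQ (hδ : crossDet x y ≠ 0) (s : ℂ)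
    (hs : s ^ 2 = crossDet x y / (2 * Complex.I)) :
    (s • (Qmat x y)⁻¹).det = -Complex.I / 2 := by
  have hQu : IsUnit (Qmat x y).det := by rw [Qdet]; exact isUnit_iff_ne_zero.mpr hδ
  rw [Matrix.det_smul, Matrix.det_nonsing_inv, Qdet]
  simp only [Fintype.card_fin]
  rw [Ring.inverse_eq_inv', hs]
  have hI := Complex.I_sq
  field_simp
  linear_combination hI

lemma memK (hδ : crossDet x y ≠ 0) (s : ℂ)
    (hs : s ^ 2 = crossDet x y / (2 * Complex.I)) (B : SL2C) :
    B ∈ Kset x y ↔ ∃ μ : ℂ, μ ≠ 0 ∧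
      (B : Matrix (Fin 2) (Fin 2) ℂ) = Pm * Dmat μ * (s • (Qmat x y)⁻¹) := by
  have hQu : IsUnit (Qmat x y).det := by rw [Qdet]; exact isUnit_iff_ne_zero.mpr hδ
  have hs0 : s ≠ 0 := s_ne x y hδ s hs
  constructor
  · rintro ⟨h1, h2⟩
    simp only [SameDir, crossDet, vI, vmI, Matrix.mulVec, dotProduct, Fin.sum_univ_two,
      Matrix.cons_val_zero, Matrix.cons_val_one, Matrix.head_cons] at h1 h2
    obtain ⟨a0, ha0⟩ : ∃ a0 : ℂ, a0 = (B : Matrix (Fin 2) (Fin 2) ℂ) 1 0 * x 0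
        + (B : Matrix (Fin 2) (Fin 2) ℂ) 1 1 * x 1 := ⟨_, rfl⟩
    obtain ⟨b0, hb0⟩ : ∃ b0 : ℂ, b0 = (B : Matrix (Fin 2) (Fin 2) ℂ) 1 0 * y 0
        + (B : Matrix (Fin 2) (Fin 2) ℂ) 1 1 * y 1 := ⟨_, rfl⟩
    have hBQ : (B : Matrix (Fin 2) (Fin 2) ℂ) * Qmat x y
        = !![a0 * Complex.I, -(b0 * Complex.I); a0, b0] := by
      ext i j
      fin_cases i <;> fin_cases j <;>
        simp [Qmat, Matrix.mul_apply, Fin.sum_univ_two]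
      · linear_combination h1 - Complex.I * ha0
      · linear_combination h2 + Complex.I * hb0
      · linear_combination -ha0
      · linear_combination -hb0
    have hdm : (!![a0 * Complex.I, -(b0 * Complex.I); a0, b0]).det = crossDet x y := by
      rw [← hBQ, Matrix.det_mul, Matrix.SpecialLinearGroup.det_coe, one_mul, Qdet]
    rw [Matrix.det_fin_two_of] at hdm
    have hab : a0 * b0 = s ^ 2 := by
      apply mul_right_cancel₀ two_I_ne
      rw [hs]
      field_simp
      linear_combination hdm
    have ha0ne : a0 ≠ 0 := by
      intro h
      rw [h] at hdm
      exact hδ (by linear_combination -hdm)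
    refine ⟨a0 / s, div_ne_zero ha0ne hs0, ?_⟩
    have hE : Pm * Dmat (a0 / s) * (s • (Qmat x y)⁻¹)
        = !![a0 * Complex.I, -(b0 * Complex.I); a0, b0] * (Qmat x y)⁻¹ := by
      rw [Matrix.mul_smul, ← Matrix.smul_mul]
      congr 1
      ext i j
      fin_cases i <;> fin_cases j <;>
        simp [Pm, Dmat, Matrix.mul_apply, Fin.sum_univ_two]
      · field_simp
      · field_simp
        linear_combination -hab
      · field_simp
      · field_simp
        linear_combination -hab
    rw [hE, ← hBQ]
    exact (Matrix.mul_nonsing_inv_cancel_right (Qmat x y) _ hQu).symm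
  · rintro ⟨μ, hμ0, hBeq⟩
    have hinvx : (Qmat x y)⁻¹.mulVec x = ![1, 0] := by
      have h := congrArg (fun v => (Qmat x y)⁻¹.mulVec v) (Qcol0 x y)
      simp only [Matrix.mulVec_mulVec] at h
      rw [Matrix.nonsing_inv_mul _ hQu, Matrix.one_mulVec] at h
      exact h.symm
    have hinvy : (Qmat x y)⁻¹.mulVec y = ![0, 1] := by
      have h := congrArg (fun v => (Qmat x y)⁻¹.mulVec v) (Qcol1 x y)
      simp only [Matrix.mulVec_mulVec] at h
      rw [Matrix.nonsing_inv_mul _ hQu, Matrix.one_mulVec] at h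
      exact h.symm
    have hRx : (s • (Qmat x y)⁻¹).mulVec x = s • ![1, 0] := by
      rw [Matrix.smul_mulVec, hinvx]
    have hRy : (s • (Qmat x y)⁻¹).mulVec y = s • ![0, 1] := by
      rw [Matrix.smul_mulVec, hinvy]
    have hx1 : (B : Matrix (Fin 2) (Fin 2) ℂ).mulVec x = ![Complex.I * (μ * s), μ * s] := by
      rw [hBeq, ← Matrix.mulVec_mulVec, hRx, ← Matrix.mulVec_mulVec]
      funext i
      fin_cases i <;>
        simp [Pm, Dmat, Matrix.mulVec, dotProduct, Fin.sum_univ_two] <;> ring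
    have hy1 : (B : Matrix (Fin 2) (Fin 2) ℂ).mulVec y = ![-(Complex.I * (μ⁻¹ * s)), μ⁻¹ * s] := by
      rw [hBeq, ← Matrix.mulVec_mulVec, hRy, ← Matrix.mulVec_mulVec]
      funext i
      fin_cases i <;>
        simp [Pm, Dmat, Matrix.mulVec, dotProduct, Fin.sum_univ_two] <;> ring
    constructor
    · rw [SameDir, crossDet, hx1]
      simp [vI]
      ring
    · rw [SameDir, crossDet, hy1]
      simp [vmI]
      ring

end KChar

lemma tmin_eq (p q : ℝ) (hp0 : 0 < p) (hq0 : 0 < q) :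
    Real.sqrt (q / p) * p + q / Real.sqrt (q / p) = 2 * Real.sqrt (p * q) := by
  have hsp : Real.sqrt (q / p) = Real.sqrt q / Real.sqrt p := Real.sqrt_div hq0.le p
  have hsp0 : 0 < Real.sqrt p := Real.sqrt_pos.mpr hp0
  have hsq0 : 0 < Real.sqrt q := Real.sqrt_pos.mpr hq0
  have hsp2 : Real.sqrt p ^ 2 = p := Real.sq_sqrt hp0.le
  have hsq2 : Real.sqrt q ^ 2 = q := Real.sq_sqrt hq0.le
  rw [hsp, Real.sqrt_mul hp0.le]
  field_simp
  nlinarith [hsp2, hsq2, hsp0, hsq0]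


end

/-- the infimum k(x,y) is attained, exactly at minimizers. -/
theorem stmt2 (x y : Fin 2 → ℂ) (hx : x ≠ 0) (hy : y ≠ 0) (hdist : ¬ SameDir x y) :
    (∃ B ∈ Kset x y, opN (B : Matrix (Fin 2) (Fin 2) ℂ) ^ 2 = kfun x y) ∧
    (∀ B ∈ Kset x y,
      (opN (B : Matrix (Fin 2) (Fin 2) ℂ) ^ 2 = kfun x y ↔ Minimizing B)) := by
  have hδ : crossDet x y ≠ 0 := hdist
  obtain ⟨s, hs⟩ := IsAlgClosed.exists_pow_nat_eq (crossDet x y / (2 * Complex.I)) (n := 2)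
    (by norm_num)
  have hdetR := detsQ x y hδ s hs
  set R : Matrix (Fin 2) (Fin 2) ℂ := s • (Qmat x y)⁻¹ with hR
  set p := Complex.normSq (R 0 0) + Complex.normSq (R 0 1) with hp
  set q := Complex.normSq (R 1 0) + Complex.normSq (R 1 1) with hq
  have hp0 : 0 < p := p_pos R hdetR
  have hq0 : 0 < q := q_pos R hdetR
  have hpq : 1/4 ≤ p * q := pq_ge R hdetR
  set g := Real.sqrt (p * q) with hg
  have hg0 : 0 ≤ g := Real.sqrt_nonneg _
  have hg2 : g ^ 2 = p * q := Real.sq_sqrt (by positivity)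
  have h14 : Real.sqrt (1/4) = 1/2 := by
    rw [show (1/4:ℝ) = (1/2)^2 by norm_num]
    exact Real.sqrt_sq (by norm_num)
  have hghalf : 1/2 ≤ g := h14 ▸ Real.sqrt_le_sqrt hpq
  have h1tmin : 1 ≤ 2 * g := by linarith
  have hmemval : ∀ B ∈ Kset x y, ∃ u : ℝ, 0 < u ∧
      opN (B : Matrix (Fin 2) (Fin 2) ℂ) ^ 2
        = (u * p + q / u) + Real.sqrt ((u * p + q / u) ^ 2 - 1) ∧
      (Minimizing B ↔ u * p = q / u) := by
    intro B hB
    obtain ⟨μ, hμ0, hBeq⟩ := (memK x y hδ s hs B).mp hB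
    refine ⟨Complex.normSq μ, Complex.normSq_pos.mpr hμ0, ?_, ?_⟩
    · rw [hBeq]
      exact form_opN R hdetR μ hμ0
    · exact form_min R hdetR μ hμ0 B hBeq
  have hamgm : ∀ u : ℝ, 0 < u → 2 * g ≤ u * p + q / u ∧ (u * p + q / u = 2 * g ↔ u * p = q / u) := by
    intro u hu
    have hAB : (u * p) * (q / u) = g ^ 2 := by rw [hg2]; field_simp
    exact amgm (u * p) (q / u) g (by positivity) hg0 hAB
  set m := 2 * g + Real.sqrt ((2 * g) ^ 2 - 1) with hm
  have hqp0 : 0 < q / p := div_pos hq0 hp0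
  set μ0 : ℂ := ((Real.sqrt (Real.sqrt (q / p)) : ℝ) : ℂ) with hμ0def
  have hμ0ne : μ0 ≠ 0 := by
    rw [hμ0def]
    exact Complex.ofReal_ne_zero.mpr (ne_of_gt (Real.sqrt_pos.mpr (Real.sqrt_pos.mpr hqp0)))
  have hu0 : Complex.normSq μ0 = Real.sqrt (q / p) := by
    rw [hμ0def, Complex.normSq_ofReal]
    exact Real.mul_self_sqrt (Real.sqrt_nonneg _)
  have ht0 : Real.sqrt (q / p) * p + q / Real.sqrt (q / p) = 2 * g :=
    tmin_eq p q hp0 hq0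
  set B0 : SL2C := ⟨Pm * Dmat μ0 * R, form_det R hdetR μ0 hμ0ne⟩ with hB0
  have hB0coe : (B0 : Matrix (Fin 2) (Fin 2) ℂ) = Pm * Dmat μ0 * R := rfl
  have hB0mem : B0 ∈ Kset x y := (memK x y hδ s hs B0).mpr ⟨μ0, hμ0ne, hB0coe⟩
  have hB0val : opN (B0 : Matrix (Fin 2) (Fin 2) ℂ) ^ 2 = m := by
    rw [hB0coe, form_opN R hdetR μ0 hμ0ne, hu0, ht0]
  have himg : m ∈ (fun B : SL2C => opN (B : Matrix (Fin 2) (Fin 2) ℂ) ^ 2) '' Kset x y :=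
    ⟨B0, hB0mem, hB0val⟩
  have hlow : ∀ r ∈ (fun B : SL2C => opN (B : Matrix (Fin 2) (Fin 2) ℂ) ^ 2) '' Kset x y,
      m ≤ r := by
    rintro r ⟨B, hB, rfl⟩
    obtain ⟨u, hu, hval, -⟩ := hmemval B hB
    show m ≤ opN (B : Matrix (Fin 2) (Fin 2) ℂ) ^ 2
    rw [hval]
    exact hfun_mono (2 * g) (u * p + q / u) h1tmin (hamgm u hu).1
  have hkfun : kfun x y = m :=
    le_antisymm (csInf_le ⟨m, fun r hr => hlow r hr⟩ himg) (le_csInf ⟨m, himg⟩ hlow)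
  constructor
  · exact ⟨B0, hB0mem, by rw [hB0val, hkfun]⟩
  · intro B hB
    obtain ⟨u, hu, hval, hmin⟩ := hmemval B hB
    have hge := (hamgm u hu).1
    constructor
    · intro h
      rw [hval, hkfun, hm] at h
      have heq := hfun_inj (2 * g) (u * p + q / u) h1tmin hge h.symm
      exact hmin.mpr ((hamgm u hu).2.mp heq.symm)
    · intro h
      have ht : u * p + q / u = 2 * g := (hamgm u hu).2.mpr (hmin.mp h)
      rw [hval, ht, hkfun, hm]
end

section
/- A matrix B ∈ SL(2,ℂ) is minimizing (i.e., ‖B⁻¹·(i,1)ᵀ‖ = ‖B⁻¹·(-i,1)ᵀ‖) if and only if B⁻¹·(ℝ ∪ {∞}) equals the set of points z ∈ ℙ¹(ℂ) equidistant (in the spherical sine-of-angle distance d) from B⁻¹·i and B⁻¹·(-i). -/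
open Matrix Complex Filter

section Aux

lemma crossDet_mulVec (A : Matrix (Fin 2) (Fin 2) ℂ) (x y : Fin 2 → ℂ) :
    crossDet (A.mulVec x) (A.mulVec y) = A.det * crossDet x y := by
  simp [crossDet, Matrix.mulVec, dotProduct, Fin.sum_univ_two, Matrix.det_fin_two]
  ring

lemma vnorm_pos_s5 {u : Fin 2 → ℂ} (hu : u ≠ 0) : 0 < vnorm u := by
  have h : u 0 ≠ 0 ∨ u 1 ≠ 0 := by
    by_contra h; push_neg at h
    exact hu (funext fun i => by fin_cases i <;> simp [h.1, h.2])
  apply Real.sqrt_pos.mpr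
  rcases h with h | h
  · have := norm_pos_iff.mpr h
    nlinarith [sq_nonneg ‖u 1‖]
  · have := norm_pos_iff.mpr h
    nlinarith [sq_nonneg ‖u 0‖]

lemma norm_key (p q : ℂ) :
    (‖p - q * Complex.I‖ = ‖p + q * Complex.I‖) ↔ p.re * q.im = p.im * q.re := by
  rw [Complex.norm_def, Complex.norm_def,
    Real.sqrt_inj (Complex.normSq_nonneg _) (Complex.normSq_nonneg _)]
  simp only [Complex.normSq_apply, Complex.sub_re, Complex.sub_im, Complex.add_re,
    Complex.add_im, Complex.mul_re, Complex.mul_im, Complex.I_re, Complex.I_im]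
  constructor <;> intro h <;> nlinarith [h]

lemma real_dir_iff (p q : ℂ) :
    (∃ a b : ℝ, (a ≠ 0 ∨ b ≠ 0) ∧ p * (b : ℂ) - q * (a : ℂ) = 0) ↔
      p.re * q.im = p.im * q.re := by
  constructor
  · rintro ⟨a, b, hab, h⟩
    rw [Complex.ext_iff] at h
    simp only [Complex.sub_re, Complex.sub_im, Complex.mul_re, Complex.mul_im,
      Complex.ofReal_re, Complex.ofReal_im, Complex.zero_re, Complex.zero_im,
      mul_zero, zero_mul, sub_zero, add_zero, zero_add] at h
    obtain ⟨h1, h2⟩ := h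
    rcases eq_or_ne b 0 with hb | hb
    · have ha : a ≠ 0 := by tauto
      subst hb
      have hqre : q.re = 0 := by
        have h1' : q.re * a = 0 := by linarith [h1]
        exact (mul_eq_zero.mp h1').resolve_right ha
      have hqim : q.im = 0 := by
        have h2' : q.im * a = 0 := by linarith [h2]
        exact (mul_eq_zero.mp h2').resolve_right ha
      simp [hqre, hqim]
    · have key : (p.re * q.im - p.im * q.re) * b = 0 := by
        linear_combination q.im * h1 - q.re * h2
      have := (mul_eq_zero.mp key).resolve_right hb
      linarith
  · intro him
    rcases eq_or_ne q 0 with hq | hq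
    · exact ⟨1, 0, Or.inl one_ne_zero, by simp [hq]⟩
    · refine ⟨p.re * q.re + p.im * q.im, q.re ^ 2 + q.im ^ 2, Or.inr ?_, ?_⟩
      · have := Complex.normSq_pos.mpr hq
        simp only [Complex.normSq_apply] at this
        nlinarith
      · rw [Complex.ext_iff]
        constructor <;>
          simp only [Complex.sub_re, Complex.sub_im, Complex.mul_re, Complex.mul_im,
            Complex.ofReal_re, Complex.ofReal_im, Complex.zero_re, Complex.zero_im,
            mul_zero, zero_mul, sub_zero, add_zero, zero_add]
        · linear_combination q.im * him
        · linear_combination (-q.re) * him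


end Aux

/-- B is minimizing iff B⁻¹·(ℝ∪{∞}) is the great circle of points
equidistant from B⁻¹·i and B⁻¹·(-i). -/
theorem stmt5 (B : SL2C) :
    Minimizing B ↔
    ∀ v : Fin 2 → ℂ, v ≠ 0 →
      ((∃ a b : ℝ, (a ≠ 0 ∨ b ≠ 0) ∧
          SameDir ((B : Matrix (Fin 2) (Fin 2) ℂ).mulVec v) ![(a : ℂ), (b : ℂ)]) ↔
        dSin v ((((B⁻¹ : SL2C) : Matrix (Fin 2) (Fin 2) ℂ)).mulVec vI)
          = dSin v ((((B⁻¹ : SL2C) : Matrix (Fin 2) (Fin 2) ℂ)).mulVec vmI)) := by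
  set A : Matrix (Fin 2) (Fin 2) ℂ := (B : Matrix (Fin 2) (Fin 2) ℂ) with hA
  set M : Matrix (Fin 2) (Fin 2) ℂ := ((B⁻¹ : SL2C) : Matrix (Fin 2) (Fin 2) ℂ) with hM
  have hMA : M * A = 1 := by
    rw [hM, hA, ← Matrix.SpecialLinearGroup.coe_mul, inv_mul_cancel]
    rfl
  have hAM : A * M = 1 := by
    rw [hM, hA, ← Matrix.SpecialLinearGroup.coe_mul, mul_inv_cancel]
    rfl
  have hdetM : M.det = 1 := Matrix.SpecialLinearGroup.det_coe _
  have hMv : ∀ x, M.mulVec (A.mulVec x) = x := by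
    intro x; rw [Matrix.mulVec_mulVec, hMA, Matrix.one_mulVec]
  have hAv : ∀ x, A.mulVec (M.mulVec x) = x := by
    intro x; rw [Matrix.mulVec_mulVec, hAM, Matrix.one_mulVec]
  have hcd : ∀ v x : Fin 2 → ℂ, crossDet v (M.mulVec x) = crossDet (A.mulVec v) x := by
    intro v x
    conv_lhs => rw [← hMv v]
    rw [crossDet_mulVec, hdetM, one_mul]
  have hU : M.mulVec vI ≠ 0 := by
    intro h
    have := hAv vI
    rw [h, Matrix.mulVec_zero] at this
    have h0 := congrFun this 1
    simp [vI] at h0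
  have hW : M.mulVec vmI ≠ 0 := by
    intro h
    have := hAv vmI
    rw [h, Matrix.mulVec_zero] at this
    have h0 := congrFun this 1
    simp [vmI] at h0
  have hNu : 0 < vnorm (M.mulVec vI) := vnorm_pos_s5 hU
  have hNw : 0 < vnorm (M.mulVec vmI) := vnorm_pos_s5 hW
  have hcdI : ∀ v : Fin 2 → ℂ,
      crossDet (A.mulVec v) vI = (A.mulVec v) 0 - (A.mulVec v) 1 * Complex.I := by
    intro v; simp [crossDet, vI]
  have hcdmI : ∀ v : Fin 2 → ℂ,
      crossDet (A.mulVec v) vmI = (A.mulVec v) 0 + (A.mulVec v) 1 * Complex.I := by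
    intro v; simp [crossDet, vmI]
  constructor
  · intro hmin v hv
    have hvpos := vnorm_pos_s5 hv
    set p : ℂ := (A.mulVec v) 0 with hp
    set q : ℂ := (A.mulVec v) 1 with hq
    have hmin' : vnorm (M.mulVec vI) = vnorm (M.mulVec vmI) := hmin
    have hdsin : (dSin v (M.mulVec vI) = dSin v (M.mulVec vmI)) ↔
        ‖p - q * Complex.I‖ = ‖p + q * Complex.I‖ := by
      unfold dSin
      rw [hcd, hcd, hcdI, hcdmI, ← hp, ← hq, ← hmin']
      have hden : vnorm v * vnorm (M.mulVec vI) ≠ 0 := by positivity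
      exact div_left_inj' hden
    rw [hdsin, norm_key, ← real_dir_iff]
    constructor
    · rintro ⟨a, b, hab, hdir⟩
      refine ⟨a, b, hab, ?_⟩
      have : crossDet (A.mulVec v) ![(a : ℂ), (b : ℂ)] = p * (b : ℂ) - q * (a : ℂ) := by
        simp [crossDet, hp, hq]
      rw [← this]; exact hdir
    · rintro ⟨a, b, hab, hdir⟩
      refine ⟨a, b, hab, ?_⟩
      show crossDet (A.mulVec v) ![(a : ℂ), (b : ℂ)] = 0
      have : crossDet (A.mulVec v) ![(a : ℂ), (b : ℂ)] = p * (b : ℂ) - q * (a : ℂ) := by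
        simp [crossDet, hp, hq]
      rw [this]; exact hdir
  · intro H
    set v : Fin 2 → ℂ := M.mulVec ![1, 0] with hv
    have hvA : A.mulVec v = ![1, 0] := hAv _
    have hvne : v ≠ 0 := by
      intro h
      rw [h, Matrix.mulVec_zero] at hvA
      exact one_ne_zero (congrFun hvA 0).symm
    have hvpos := vnorm_pos_s5 hvne
    have hiff := H v hvne
    have hdir : ∃ a b : ℝ, (a ≠ 0 ∨ b ≠ 0) ∧
        SameDir (A.mulVec v) ![(a : ℂ), (b : ℂ)] := by
      refine ⟨1, 0, Or.inl one_ne_zero, ?_⟩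
      show crossDet (A.mulVec v) ![(1 : ℂ), (0 : ℂ)] = 0
      rw [hvA]
      simp [crossDet]
    have hds := hiff.mp hdir
    unfold dSin at hds
    rw [hcd, hcd, hcdI, hcdmI, hvA] at hds
    norm_num at hds
    have hne1 : vnorm v * vnorm (M.mulVec vI) ≠ 0 := by positivity
    have hne2 : vnorm v * vnorm (M.mulVec vmI) ≠ 0 := by positivity
    show vnorm (M.mulVec vI) = vnorm (M.mulVec vmI)
    rcases hds with h | h
    · convert h using 2 <;> (ext i; fin_cases i <;> simp [Matrix.mulVec, dotProduct, Fin.sum_univ_two])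
    · exact absurd h (ne_of_gt hvpos)
end

section
/- Let A ∈ SL(2,ℝ) and θ > 0. Then the Möbius transformation of R_{-iθ}·A maps the upper half-plane ℍ into the set ℍ_θ = {z ∈ ℍ : |(z-i)/(z+i)| < e^{-4πθ}}, which is a precompact subset of ℍ. -/
open Matrix Complex Filter

open Complex in
private lemma im_pos_of_norm_lt' {w : ℂ} (h : ‖w - Complex.I‖ < ‖w + Complex.I‖) :
    0 < w.im := by
  have h1 : ‖w - Complex.I‖ ^ 2 < ‖w + Complex.I‖ ^ 2 := by
    nlinarith [norm_nonneg (w - Complex.I), norm_nonneg (w + Complex.I)]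
  rw [Complex.sq_norm, Complex.sq_norm] at h1
  simp only [Complex.normSq_apply, Complex.sub_re, Complex.sub_im, Complex.add_re,
    Complex.add_im, Complex.I_re, Complex.I_im] at h1
  nlinarith

/-- R_{-iθ}A maps ℍ into the precompact subset ℍ_θ ⊂ ℍ. -/
theorem stmt6 (A : Matrix.SpecialLinearGroup (Fin 2) ℝ) (θ : ℝ) (hθ : 0 < θ) :
    (∀ z : ℂ, 0 < z.im →
      moebius (Rmat (-(θ : ℂ) * Complex.I) * cplx (A : Matrix (Fin 2) (Fin 2) ℝ)) z ∈
        {w : ℂ | 0 < w.im ∧ ‖(w - Complex.I) / (w + Complex.I)‖ < Real.exp (-(4 * Real.pi * θ))}) ∧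
    IsCompact (closure
      {w : ℂ | 0 < w.im ∧ ‖(w - Complex.I) / (w + Complex.I)‖ < Real.exp (-(4 * Real.pi * θ))}) ∧
    closure {w : ℂ | 0 < w.im ∧ ‖(w - Complex.I) / (w + Complex.I)‖ < Real.exp (-(4 * Real.pi * θ))}
      ⊆ {w : ℂ | 0 < w.im} := by
  have hπ : (0:ℝ) < Real.pi := Real.pi_pos
  set t : ℝ := 2 * Real.pi * θ with ht
  have ht0 : 0 < t := by positivity
  set r : ℝ := Real.exp (-(4 * Real.pi * θ)) with hrdef
  have hr0 : 0 < r := Real.exp_pos _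
  have hr1 : r < 1 := by
    rw [hrdef]
    have : -(4 * Real.pi * θ) < 0 := by nlinarith
    exact Real.exp_lt_one_iff.mpr this
  have hrtt : r = Real.exp (-t) * Real.exp (-t) := by
    rw [hrdef, ← Real.exp_add, ht]; ring_nf
  set S := {w : ℂ | 0 < w.im ∧ ‖(w - Complex.I) / (w + Complex.I)‖ < r} with hS
  set T := {w : ℂ | ‖w - Complex.I‖ ≤ r * ‖w + Complex.I‖} with hT
  have hTsub : T ⊆ {w : ℂ | 0 < w.im} := by
    intro w hw
    simp only [hT, Set.mem_setOf_eq] at hw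
    have hwI : w + Complex.I ≠ 0 := by
      intro h0
      rw [h0] at hw
      have hw2 : w = -Complex.I := by linear_combination h0
      rw [hw2] at hw
      have h2 : ‖(-Complex.I - Complex.I : ℂ)‖ = 2 := by
        have he : (-Complex.I - Complex.I : ℂ) = (-2 : ℂ) * Complex.I := by ring
        rw [he, norm_mul, Complex.norm_I]
        norm_num
      rw [h2] at hw
      simp only [neg_add_cancel, norm_zero, mul_zero] at hw
      linarith
    have hpos : 0 < ‖w + Complex.I‖ := norm_pos_iff.mpr hwI
    exact im_pos_of_norm_lt' (lt_of_le_of_lt hw (by nlinarith [hr1, hpos]))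
  have hST : S ⊆ T := by
    intro w hw
    obtain ⟨hw1, hw2⟩ := hw
    have hwI : w + Complex.I ≠ 0 := by
      intro h0
      have : (w + Complex.I).im = w.im + 1 := by simp
      rw [h0] at this; simp at this; linarith
    have hpos : 0 < ‖w + Complex.I‖ := norm_pos_iff.mpr hwI
    rw [norm_div, div_lt_iff₀ hpos] at hw2
    exact le_of_lt hw2
  have hTclosed : IsClosed T := by
    have : T = {w : ℂ | ‖w - Complex.I‖ - r * ‖w + Complex.I‖ ≤ 0} := by
      ext w; simp [hT, sub_nonpos]
    rw [this]
    apply isClosed_le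
    · fun_prop
    · exact continuous_const
  have hTbdd : Bornology.IsBounded T := by
    apply (Metric.isBounded_closedBall (x := Complex.I) (r := 2 * r / (1 - r))).subset
    intro w hw
    simp only [hT, Set.mem_setOf_eq] at hw
    simp only [Metric.mem_closedBall, Complex.dist_eq]
    have h2 : ‖w + Complex.I‖ ≤ ‖w - Complex.I‖ + 2 := by
      have he : w + Complex.I = (w - Complex.I) + 2 * Complex.I := by ring
      rw [he]
      refine (norm_add_le _ _).trans ?_
      have : ‖(2 * Complex.I : ℂ)‖ = 2 := by
        rw [norm_mul, Complex.norm_I]; norm_num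
      rw [this]
    rw [le_div_iff₀ (by linarith : (0:ℝ) < 1 - r)]
    nlinarith [mul_le_mul_of_nonneg_left h2 hr0.le]
  have hclosT : closure S ⊆ T := closure_minimal hST hTclosed
  refine ⟨?_, ?_, fun w hw => hTsub (hclosT hw)⟩
  · intro z hz
    simp only [hS, Set.mem_setOf_eq]
    set M : Matrix (Fin 2) (Fin 2) ℂ :=
      Rmat (-(θ : ℂ) * Complex.I) * cplx (A : Matrix (Fin 2) (Fin 2) ℝ) with hM
    set a : ℝ := (A : Matrix (Fin 2) (Fin 2) ℝ) 0 0 with ha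
    set b : ℝ := (A : Matrix (Fin 2) (Fin 2) ℝ) 0 1 with hb
    set c : ℝ := (A : Matrix (Fin 2) (Fin 2) ℝ) 1 0 with hc
    set d : ℝ := (A : Matrix (Fin 2) (Fin 2) ℝ) 1 1 with hd
    have hdetR : a * d - b * c = 1 := by
      have h := A.2
      rw [Matrix.det_fin_two] at h
      exact h
    set u : ℂ := (a : ℂ) * z + (b : ℂ) with hu
    set v : ℂ := (c : ℂ) * z + (d : ℂ) with hv
    have key : ‖u + Complex.I * v‖ ^ 2 - ‖u - Complex.I * v‖ ^ 2 = 4 * z.im := by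
      rw [Complex.sq_norm, Complex.sq_norm]
      simp only [hu, hv, Complex.normSq_apply, Complex.add_re, Complex.add_im,
        Complex.sub_re, Complex.sub_im, Complex.mul_re, Complex.mul_im,
        Complex.I_re, Complex.I_im, Complex.ofReal_re, Complex.ofReal_im]
      linear_combination (4 * z.im) * hdetR
    have hQpos : 0 < ‖u + Complex.I * v‖ := by
      nlinarith [norm_nonneg (u - Complex.I * v), norm_nonneg (u + Complex.I * v)]
    have hQne : u + Complex.I * v ≠ 0 := by
      intro h0; rw [h0, norm_zero] at hQpos; exact lt_irrefl _ hQpos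
    have hPQ : ‖u - Complex.I * v‖ < ‖u + Complex.I * v‖ := by
      nlinarith [norm_nonneg (u - Complex.I * v), norm_nonneg (u + Complex.I * v)]
    -- entries of M
    have harg : 2 * (Real.pi : ℂ) * (-(θ : ℂ) * Complex.I) = -((t : ℂ) * Complex.I) := by
      rw [ht]; push_cast; ring
    have hcos : Complex.cos (2 * (Real.pi : ℂ) * (-(θ : ℂ) * Complex.I)) =
        Complex.cosh (t : ℂ) := by
      rw [harg, Complex.cos_neg, Complex.cos_mul_I]
    have hsin : Complex.sin (2 * (Real.pi : ℂ) * (-(θ : ℂ) * Complex.I)) =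
        -(Complex.sinh (t : ℂ) * Complex.I) := by
      rw [harg, Complex.sin_neg, Complex.sin_mul_I]
    set ch : ℂ := Complex.cosh (t : ℂ) with hch
    set sh : ℂ := Complex.sinh (t : ℂ) with hsh
    have hRe : Rmat (-(θ : ℂ) * Complex.I) =
        !![ch, sh * Complex.I; -(sh * Complex.I), ch] := by
      unfold Rmat
      rw [hcos, hsin, neg_neg]
    have hM00 : M 0 0 = ch * a + sh * Complex.I * c := by
      rw [hM, hRe, Matrix.mul_apply, Fin.sum_univ_two]
      simp [cplx, Matrix.map_apply, ← ha, ← hc]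
      try ring
    have hM01 : M 0 1 = ch * b + sh * Complex.I * d := by
      rw [hM, hRe, Matrix.mul_apply, Fin.sum_univ_two]
      simp [cplx, Matrix.map_apply, ← hb, ← hd]
      try ring
    have hM10 : M 1 0 = -(sh * Complex.I) * a + ch * c := by
      rw [hM, hRe, Matrix.mul_apply, Fin.sum_univ_two]
      simp [cplx, Matrix.map_apply, ← ha, ← hc]
      try ring
    have hM11 : M 1 1 = -(sh * Complex.I) * b + ch * d := by
      rw [hM, hRe, Matrix.mul_apply, Fin.sum_univ_two]
      simp [cplx, Matrix.map_apply, ← hb, ← hd]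
      try ring
    set N : ℂ := M 0 0 * z + M 0 1 with hN
    set Dm : ℂ := M 1 0 * z + M 1 1 with hDm
    have hP : N - Complex.I * Dm = Complex.exp (-(t : ℂ)) * (u - Complex.I * v) := by
      rw [hN, hDm, hM00, hM01, hM10, hM11, ← Complex.cosh_sub_sinh, ← hch, ← hsh, hu, hv]
      linear_combination (sh * ((a : ℂ) * z + b)) * Complex.I_sq
    have hQ : N + Complex.I * Dm = Complex.exp ((t : ℂ)) * (u + Complex.I * v) := by
      rw [hN, hDm, hM00, hM01, hM10, hM11, ← Complex.cosh_add_sinh, ← hch, ← hsh, hu, hv]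
      linear_combination (-(sh * ((a : ℂ) * z + b))) * Complex.I_sq
    have hnormexp : ∀ s : ℝ, ‖Complex.exp ((s : ℂ))‖ = Real.exp s := by
      intro s
      rw [Complex.norm_exp]
      simp
    have hnP : ‖N - Complex.I * Dm‖ = Real.exp (-t) * ‖u - Complex.I * v‖ := by
      rw [hP, norm_mul]
      congr 1
      rw [show (-(t : ℂ)) = ((-t : ℝ) : ℂ) by push_cast; ring, hnormexp]
    have hnQ : ‖N + Complex.I * Dm‖ = Real.exp t * ‖u + Complex.I * v‖ := by
      rw [hQ, norm_mul, hnormexp]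
    have hexplt : Real.exp (-t) < Real.exp t := Real.exp_lt_exp.mpr (by linarith)
    have hNQlt : ‖N - Complex.I * Dm‖ < ‖N + Complex.I * Dm‖ := by
      rw [hnP, hnQ]
      nlinarith [mul_lt_mul_of_pos_left hPQ (Real.exp_pos (-t)),
        mul_lt_mul_of_pos_right hexplt hQpos]
    have hQne2 : N + Complex.I * Dm ≠ 0 := by
      rw [hQ]
      exact mul_ne_zero (Complex.exp_ne_zero _) hQne
    have hDmne : Dm ≠ 0 := by
      intro h0
      have h1 : N - Complex.I * Dm = N + Complex.I * Dm := by rw [h0]; ring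
      rw [h1] at hNQlt
      exact lt_irrefl _ hNQlt
    have hw : moebius M z = N / Dm := rfl
    rw [hw]
    have hDpos : 0 < ‖Dm‖ := norm_pos_iff.mpr hDmne
    have hsub : N / Dm - Complex.I = (N - Complex.I * Dm) / Dm := by
      field_simp
    have hadd : N / Dm + Complex.I = (N + Complex.I * Dm) / Dm := by
      field_simp
    constructor
    · apply im_pos_of_norm_lt'
      rw [hsub, hadd, norm_div, norm_div]
      gcongr
    · have hrat : (N - Complex.I * Dm) / Dm / ((N + Complex.I * Dm) / Dm)
          = (N - Complex.I * Dm) / (N + Complex.I * Dm) := by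
        field_simp
      rw [hsub, hadd, hrat, norm_div, hnP, hnQ,
        div_lt_iff₀ (mul_pos (Real.exp_pos t) hQpos), hrtt]
      have hee : Real.exp (-t) * Real.exp t = 1 := by
        rw [← Real.exp_add]; simp
      calc Real.exp (-t) * ‖u - Complex.I * v‖
          < Real.exp (-t) * ‖u + Complex.I * v‖ :=
            mul_lt_mul_of_pos_left hPQ (Real.exp_pos _)
        _ = Real.exp (-t) * Real.exp (-t) * (Real.exp t * ‖u + Complex.I * v‖) := by
            rw [show Real.exp (-t) * Real.exp (-t) * (Real.exp t * ‖u + Complex.I * v‖)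
              = (Real.exp (-t) * Real.exp t) * (Real.exp (-t) * ‖u + Complex.I * v‖) from by
                ring, hee, one_mul]
  · exact Metric.isCompact_of_isClosed_isBounded isClosed_closure (hTbdd.subset hclosT)
end
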